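/- Let σ_{π₁},…,σ_{π_n} ∈ Stmt₀^ω and ζ_{π₁},…,ζ_{π_n} be computations with ζ_{π_j} ◁ σ_{π_j} for every j, let σ be the composed trace with σ_t = ((σ_{π₁})_{π₁})_t; … ; ((σ_{π_n})_{π_n})_t, and let ζ̂′ = ∅[π₁, ζ_{π₁}]…[π_n, ζ_{π_n}]. Then the adapted hyper-computation of (ζ_{π₁},…,ζ_{π_n}) matches combine(σ, Seq(ζ̂′)). -/

import Mathlib

namespace TSLMC

open scoped Classical

/-! ### Theories, function terms, assignments -/

/-- A theory: interpretation of function symbols, plus distinguished values true/false. -/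
structure Thy (V F : Type) where
  ε : F → List V → V
  vtrue : V
  vfalse : V

/-- Function terms over inputs `I`, cells `C` and function symbols `F`. -/
inductive FTerm (I C F : Type) : Type where
  | inp  : I → FTerm I C F
  | cell : C → FTerm I C F
  | app  : F → List (FTerm I C F) → FTerm I C F

/-- An assignment gives values to inputs and cells. -/
abbrev Assign (V I C : Type) := I ⊕ C → V

variable {V I C F Pi : Type}

/-- Evaluation of a function term under an assignment. -/
def FTerm.eval (T : Thy V F) (a : Assign V I C) : FTerm I C F → V
  | .inp i => a (.inl i)
  | .cell c => a (.inr c)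
  | .app f ts => T.ε f (ts.attach.map fun t => t.1.eval T a)
decreasing_by
  have := List.sizeOf_lt_of_mem t.2
  simp only [FTerm.app.sizeOf_spec]
  omega

/-- A predicate term is a function term evaluating only to true or false. -/
def IsPredTerm (T : Thy V F) (τ : FTerm I C F) : Prop :=
  ∀ a : Assign V I C, τ.eval T a = T.vtrue ∨ τ.eval T a = T.vfalse

/-- The theory contains (at least) equality, negation, conjunction and a true constant,
with their usual interpretations, and true ≠ false. -/
structure Ops (V F : Type) (T : Thy V F) where
  feq : F
  fneg : F
  fand : F
  ftrue : F
  heq : ∀ x y : V, T.ε feq [x, y] = if x = y then T.vtrue else T.vfalse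
  hneg : ∀ x : V, T.ε fneg [x] = if x = T.vtrue then T.vfalse else T.vtrue
  hand : ∀ x y : V, T.ε fand [x, y] = if x = T.vtrue ∧ y = T.vtrue then T.vtrue else T.vfalse
  htrue : T.ε ftrue [] = T.vtrue
  tne : T.vtrue ≠ T.vfalse

/-! ### TSL(T) formulas -/

/-- TSL(T) formulas (atoms: predicate terms and update terms `⟦c ↞ τ⟧`). -/
inductive TSL (I C F : Type) : Type where
  | pred : FTerm I C F → TSL I C F
  | upd  : C → FTerm I C F → TSL I C F
  | not  : TSL I C F → TSL I C F
  | and  : TSL I C F → TSL I C F → TSL I C F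
  | next : TSL I C F → TSL I C F
  | untl : TSL I C F → TSL I C F → TSL I C F

/-- `prevA init ζ t` is `ζ (t-1)`, with the fixed initial assignment at `t = 0`. -/
def prevA (init : Assign V I C) (ζ : ℕ → Assign V I C) : ℕ → Assign V I C
  | 0 => init
  | t + 1 => ζ t

/-- Satisfaction of a TSL(T) formula over a computation at a time point. -/
def TSL.sat (T : Thy V F) (init : Assign V I C) (ζ : ℕ → Assign V I C) :
    TSL I C F → ℕ → Prop
  | .pred τ, t => τ.eval T (ζ t) = T.vtrue
  | .upd c τ, t => τ.eval T (prevA init ζ t) = ζ t (.inr c)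
  | .not φ, t => ¬ φ.sat T init ζ t
  | .and φ ψ, t => φ.sat T init ζ t ∧ ψ.sat T init ζ t
  | .next φ, t => φ.sat T init ζ (t + 1)
  | .untl φ ψ, t => ∃ t', t ≤ t' ∧ ψ.sat T init ζ t' ∧
      ∀ t'', t ≤ t'' → t'' < t' → φ.sat T init ζ t''

/-- The list of predicate terms appearing in a TSL(T) formula. -/
def TSL.predList : TSL I C F → List (FTerm I C F)
  | .pred τ => [τ]
  | .upd _ _ => []
  | .not φ => φ.predList
  | .and φ ψ => φ.predList ++ ψ.predList
  | .next φ => φ.predList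
  | .untl φ ψ => φ.predList ++ ψ.predList

/-- The list of update terms appearing in a TSL(T) formula. -/
def TSL.updList : TSL I C F → List (C × FTerm I C F)
  | .pred _ => []
  | .upd c τ => [(c, τ)]
  | .not φ => φ.updList
  | .and φ ψ => φ.updList ++ ψ.updList
  | .next φ => φ.updList
  | .untl φ ψ => φ.updList ++ ψ.updList

/-! ### LTL -/

/-- LTL formulas over atomic propositions `A`. -/
inductive LTL (A : Type) : Type where
  | atom : A → LTL A
  | not : LTL A → LTL A
  | and : LTL A → LTL A → LTL A
  | next : LTL A → LTL A
  | untl : LTL A → LTL A → LTL A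

/-- Standard LTL satisfaction over words of sets of atomic propositions. -/
def LTL.sat (w : ℕ → Set A) : LTL A → ℕ → Prop
  | .atom a, t => a ∈ w t
  | .not φ, t => ¬ φ.sat w t
  | .and φ ψ, t => φ.sat w t ∧ ψ.sat w t
  | .next φ, t => φ.sat w (t + 1)
  | .untl φ ψ, t => ∃ t', t ≤ t' ∧ ψ.sat w t' ∧ ∀ t'', t ≤ t'' → t'' < t' → φ.sat w t''

/-- Atomic propositions: predicate terms and update terms. -/
abbrev AP (I C F : Type) := FTerm I C F ⊕ (C × FTerm I C F)

/-- The LTL formula obtained from a TSL(T) formula by treating predicate and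
update terms as atomic propositions. -/
def TSL.toLTL : TSL I C F → LTL (AP I C F)
  | .pred τ => .atom (.inl τ)
  | .upd c τ => .atom (.inr (c, τ))
  | .not φ => .not φ.toLTL
  | .and φ ψ => .and φ.toLTL ψ.toLTL
  | .next φ => .next φ.toLTL
  | .untl φ ψ => .untl φ.toLTL ψ.toLTL

/-- `SeqW T init ζ ρ υ t` is the set of predicate terms of `ρ` and update terms of `υ`
that hold at time `t` of the computation `ζ`. -/
def SeqW (T : Thy V F) (init : Assign V I C) (ζ : ℕ → Assign V I C)
    (ρ : Set (FTerm I C F)) (υ : Set (C × FTerm I C F)) : ℕ → Set (AP I C F) :=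
  fun t => {a | Sum.elim
    (fun τ => τ ∈ ρ ∧ TSL.sat T init ζ (.pred τ) t)
    (fun u => u ∈ υ ∧ TSL.sat T init ζ (.upd u.1 u.2) t) a}

/-! ### Program statements, matching, feasibility -/

/-- Basic program statements. -/
inductive Stmt0 (I C F : Type) : Type where
  | assert : FTerm I C F → Stmt0 I C F
  | assign : C → FTerm I C F → Stmt0 I C F
  | havoc : C → Stmt0 I C F

/-- Program statements: nonempty finite sequences of basic statements. -/
abbrev Stmt (I C F : Type) := {l : List (Stmt0 I C F) // l ≠ []}

/-- A computation matches a trace of basic statements at time `t`. -/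
def matchesAt (T : Thy V F) (init : Assign V I C) (ζ : ℕ → Assign V I C)
    (σ : ℕ → Stmt0 I C F) (t : ℕ) : Prop :=
  match σ t with
  | .assert τ => τ.eval T (prevA init ζ t) = T.vtrue ∧
      ∀ c : C, ζ t (.inr c) = prevA init ζ t (.inr c)
  | .assign c τ => ζ t (.inr c) = τ.eval T (prevA init ζ t) ∧
      ∀ c', c' ≠ c → ζ t (.inr c') = prevA init ζ t (.inr c')
  | .havoc c => ∀ c', c' ≠ c → ζ t (.inr c') = prevA init ζ t (.inr c')

/-- A computation matches a trace of basic statements. -/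
def Matches (T : Thy V F) (init : Assign V I C) (ζ : ℕ → Assign V I C)
    (σ : ℕ → Stmt0 I C F) : Prop :=
  ∀ t, matchesAt T init ζ σ t

/-- Position (index of the statement, offset inside it) of the `j`-th basic statement
in the flattening of a trace of composed statements. -/
def fpos (σ : ℕ → Stmt I C F) : ℕ → ℕ × ℕ
  | 0 => (0, 0)
  | j + 1 =>
    let p := fpos σ j
    if p.2 + 1 < ((σ p.1).1).length then (p.1, p.2 + 1) else (p.1 + 1, 0)

/-- The flattening of a trace of composed statements into basic statements. -/
def flatten (σ : ℕ → Stmt I C F) (j : ℕ) : Stmt0 I C F :=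
  ((σ (fpos σ j).1).1).getD (fpos σ j).2 (((σ (fpos σ j).1).1).head (σ (fpos σ j).1).2)

/-- A computation matches a trace of composed statements (via its flattening). -/
def MatchesC (T : Thy V F) (init : Assign V I C) (ζ : ℕ → Assign V I C)
    (σ : ℕ → Stmt I C F) : Prop :=
  Matches T init ζ (flatten σ)

/-- A trace of composed statements is feasible if some computation matches it. -/
def Feasible (T : Thy V F) (init : Assign V I C) (σ : ℕ → Stmt I C F) : Prop :=
  ∃ ζ, MatchesC T init ζ σ

/-- A trace of basic statements is feasible if some computation matches it. -/
def Feasible0 (T : Thy V F) (init : Assign V I C) (σ : ℕ → Stmt0 I C F) : Prop :=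
  ∃ ζ, Matches T init ζ σ

/-! ### Büchi automata -/

/-- A Büchi automaton. -/
structure Buchi (A : Type) (Q : Type) where
  q0 : Q
  δ : Q → A → Q → Prop
  Acc : Set Q

/-- A run of a Büchi automaton on a word. -/
def Buchi.IsRun {A Q : Type} (B : Buchi A Q) (σ : ℕ → A) (r : ℕ → Q) : Prop :=
  r 0 = B.q0 ∧ ∀ t, B.δ (r t) (σ t) (r (t + 1))

/-- Büchi acceptance: some run visits accepting states infinitely often. -/
def Buchi.Accepts {A Q : Type} (B : Buchi A Q) (σ : ℕ → A) : Prop :=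
  ∃ r, B.IsRun σ r ∧ ∀ n, ∃ m, n ≤ m ∧ r m ∈ B.Acc

/-- A program automaton over basic statements satisfies a TSL(T) formula if every
computation matching an accepted trace satisfies the formula. -/
def SatisfiesTSL {Qp : Type} (T : Thy V F) (init : Assign V I C)
    (P : Buchi (Stmt0 I C F) Qp) (φ : TSL I C F) : Prop :=
  ∀ σ, P.Accepts σ → ∀ ζ, Matches T init ζ σ → φ.sat T init ζ 0

/-! ### The combine construction and the Büchi program product -/

/-- Extended cell set: original cells, inputs-as-cells, and fresh `tmp` cells. -/
abbrev CStar (I C : Type) := (C ⊕ I) ⊕ ℕ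

/-- Embedding of terms over inputs/cells into terms over the extended cell set. -/
def FTerm.embed : FTerm I C F → FTerm Empty (CStar I C) F
  | .inp i => .cell (.inl (.inr i))
  | .cell c => .cell (.inl (.inl c))
  | .app f ts => .app f (ts.attach.map fun t => t.1.embed)
decreasing_by
  have := List.sizeOf_lt_of_mem t.2
  simp only [FTerm.app.sizeOf_spec]
  omega

/-- Embedding of basic statements into statements over the extended cell set. -/
def Stmt0.embed : Stmt0 I C F → Stmt0 Empty (CStar I C) F
  | .assert τ => .assert τ.embed
  | .assign c τ => .assign (.inl (.inl c)) τ.embed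
  | .havoc c => .havoc (.inl (.inl c))

/-- Conjunction of a list of terms (via the theory's conjunction symbol). -/
def conjTerm (T : Thy V F) (O : Ops V F T) :
    List (FTerm Empty (CStar I C) F) → FTerm Empty (CStar I C) F
  | [] => .app O.ftrue []
  | τ :: ts => .app O.fand [τ, conjTerm T O ts]

/-- The `combine` construction: `save_values; s; new_inputs; check_preds_l; check_updates_l`. -/
noncomputable def combine (T : Thy V F) (O : Ops V F T) (ρ : List (FTerm I C F))
    (υ : List (C × FTerm I C F)) (inps : List I)
    (s : List (Stmt0 I C F)) (l : Set (AP I C F)) : Stmt Empty (CStar I C) F :=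
  ⟨(υ.mapIdx fun j u => Stmt0.assign (Sum.inr j) u.2.embed)
    ++ s.map Stmt0.embed
    ++ (inps.map fun i => Stmt0.havoc (Sum.inl (Sum.inr i)))
    ++ [Stmt0.assert (conjTerm T O
          (ρ.map fun τ => if Sum.inl τ ∈ l then τ.embed else .app O.fneg [τ.embed])),
        Stmt0.assert (conjTerm T O
          (υ.mapIdx fun j u =>
            let eqt : FTerm Empty (CStar I C) F :=
              .app O.feq [.cell (Sum.inl (Sum.inl u.1)), .cell (Sum.inr j)]
            if Sum.inr u ∈ l then eqt else .app O.fneg [eqt]))],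
    by simp⟩

/-- Lifting an automaton over basic statements to an automaton over (composed) statements. -/
def liftB {Qp : Type} (P : Buchi (Stmt0 I C F) Qp) : Buchi (Stmt I C F) Qp where
  q0 := P.q0
  δ := fun q w q' => ∃ s, P.δ q s q' ∧ w = ⟨[s], by simp⟩
  Acc := P.Acc

/-- The combined product `P ⊗ A` of a program automaton and a Büchi automaton over
sets of predicate/update terms. -/
noncomputable def product {Qp Qa : Type} (T : Thy V F) (O : Ops V F T)
    (P : Buchi (Stmt I C F) Qp) (A : Buchi (Set (AP I C F)) Qa)
    (ρ : List (FTerm I C F)) (υ : List (C × FTerm I C F)) (inps : List I) :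
    Buchi (Stmt Empty (CStar I C) F) (Qp × Qa) where
  q0 := (P.q0, A.q0)
  δ := fun x w y => ∃ s l, P.δ x.1 s y.1 ∧ A.δ x.2 l y.2 ∧ w = combine T O ρ υ inps s.1 l
  Acc := {x | x.2 ∈ A.Acc}

/-! ### HyperTSL(T) -/

/-- HyperTSL(T) formulas: a quantifier prefix over trace variables, followed by a
quantifier-free formula over trace-indexed inputs and cells. -/
inductive HyperTSL (I C F Pi : Type) : Type where
  | qf : TSL (I × Pi) (C × Pi) F → HyperTSL I C F Pi
  | all : Pi → HyperTSL I C F Pi → HyperTSL I C F Pi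
  | ex : Pi → HyperTSL I C F Pi → HyperTSL I C F Pi

/-- Extension `ζ̂[π, ζ]` of a hyper-computation by a computation for trace variable `π`. -/
noncomputable def extendH (ζh : ℕ → Assign V (I × Pi) (C × Pi)) (π : Pi)
    (ζ : ℕ → Assign V I C) : ℕ → Assign V (I × Pi) (C × Pi) :=
  fun t x =>
    match x with
    | .inl (i, π') => if π' = π then ζ t (.inl i) else ζh t (.inl (i, π'))
    | .inr (c, π') => if π' = π then ζ t (.inr c) else ζh t (.inr (c, π'))

/-- Satisfaction of a HyperTSL(T) formula. -/
noncomputable def HyperTSL.sat (T : Thy V F) (init : Assign V (I × Pi) (C × Pi))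
    (Z : Set (ℕ → Assign V I C)) :
    HyperTSL I C F Pi → (ℕ → Assign V (I × Pi) (C × Pi)) → ℕ → Prop
  | .qf ψ, ζh, t => ψ.sat T init ζh t
  | .all π φ, ζh, t => ∀ ζ ∈ Z, φ.sat T init Z (extendH ζh π ζ) t
  | .ex π φ, ζh, t => ∃ ζ ∈ Z, φ.sat T init Z (extendH ζh π ζ) t

/-- Lift an assignment to a hyper-assignment (every trace gets the same values). -/
def liftInit (init : Assign V I C) : Assign V (I × Pi) (C × Pi) :=
  fun x => match x with
  | .inl (i, _) => init (.inl i)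
  | .inr (c, _) => init (.inr c)

/-- The set of computations matching accepted traces of a program automaton. -/
def Zof {Qp : Type} (T : Thy V F) (init : Assign V I C)
    (P : Buchi (Stmt0 I C F) Qp) : Set (ℕ → Assign V I C) :=
  {ζ | ∃ σ, P.Accepts σ ∧ Matches T init ζ σ}

/-- A program automaton satisfies a HyperTSL(T) formula. -/
noncomputable def SatisfiesHyper {Qp : Type} (T : Thy V F) (init : Assign V I C)
    (P : Buchi (Stmt0 I C F) Qp) (φ : HyperTSL I C F Pi) : Prop :=
  φ.sat T (liftInit init) (Zof T init P) (fun _ => liftInit init) 0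

/-- Renaming of terms: cell `c` becomes `c_π`, input `i` becomes `i_π`. -/
def FTerm.rename (π : Pi) : FTerm I C F → FTerm (I × Pi) (C × Pi) F
  | .inp i => .inp (i, π)
  | .cell c => .cell (c, π)
  | .app f ts => .app f (ts.attach.map fun t => t.1.rename π)
decreasing_by
  have := List.sizeOf_lt_of_mem t.2
  simp only [FTerm.app.sizeOf_spec]
  omega

/-- Renaming of basic statements to a trace variable. -/
def Stmt0.rename (π : Pi) : Stmt0 I C F → Stmt0 (I × Pi) (C × Pi) F
  | .assert τ => .assert (τ.rename π)
  | .assign c τ => .assign (c, π) (τ.rename π)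
  | .havoc c => .havoc (c, π)

/-- The `n`-fold self-composition of a program automaton. -/
def selfComp {Qp : Type} (P : Buchi (Stmt0 I C F) Qp) (n : ℕ) :
    Buchi (Stmt (I × Fin n) (C × Fin n) F) (Fin n → Qp) where
  q0 := fun _ => P.q0
  δ := fun q w q' => ∃ ss : Fin n → Stmt0 I C F,
        (∀ j, P.δ (q j) (ss j) (q' j)) ∧
        w.1 = (List.finRange n).map fun j => (ss j).rename j
  Acc := Set.univ

/-- The `m`-fold self-composition, using the first `m` of `n` trace variables. -/
def selfCompInto {Qp : Type} (P : Buchi (Stmt0 I C F) Qp) (m n : ℕ) (h : m ≤ n) :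
    Buchi (Stmt (I × Fin n) (C × Fin n) F) (Fin m → Qp) where
  q0 := fun _ => P.q0
  δ := fun q w q' => ∃ ss : Fin m → Stmt0 I C F,
        (∀ j, P.δ (q j) (ss j) (q' j)) ∧
        w.1 = (List.finRange m).map fun j => (ss j).rename (Fin.castLE h j)
  Acc := Set.univ

end TSLMC

/-! ### k-feasibility and the automaton `P_k` -/

namespace TSLMC
open scoped Classical
variable {V I C F Pi : Type}

/-- The statement `assert(true)`. -/
def trueStmt (T : Thy V F) (O : Ops V F T) : Stmt I C F :=
  ⟨[.assert (.app O.ftrue [])], by simp⟩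

/-- Extend a finite window of statements by `assert(true)^ω`. -/
def extendTrue (T : Thy V F) (O : Ops V F T) (ss : List (Stmt I C F)) : ℕ → Stmt I C F :=
  fun t => if h : t < ss.length then ss.get ⟨t, h⟩ else trueStmt T O

/-- A finite window of statements is feasible if, followed by `assert(true)^ω`, it is
feasible for some initial assignment. -/
def WinFeasible (T : Thy V F) (O : Ops V F T) (ss : List (Stmt I C F)) : Prop :=
  ∃ init : Assign V I C, Feasible T init (extendTrue T O ss)

/-- The window `σ_j … σ_{j+k-1}` of a trace. -/
def window (σ : ℕ → α) (j k : ℕ) : List α :=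
  (List.range k).map fun i => σ (j + i)

/-- A trace is `k`-feasible if no window of `k` consecutive statements is infeasible
for all initial assignments. -/
def KFeasible (T : Thy V F) (O : Ops V F T) (k : ℕ) (σ : ℕ → Stmt I C F) : Prop :=
  ∀ j, WinFeasible T O (window σ j k)

/-- Chains of transitions of an automaton. -/
def chain {S Qp : Type} (P : Buchi S Qp) : Qp → List (S × Qp) → Prop
  | _, [] => True
  | q, (s, q') :: rest => P.δ q s q' ∧ chain P q' rest

/-- The last state of an alternating state/statement sequence. -/
def lastQ {S Qp : Type} (st : Qp × List (S × Qp)) : Qp :=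
  (st.2.getLast?).elim st.1 Prod.snd

/-- The statements of an alternating state/statement sequence. -/
def stmts {S Qp : Type} (st : Qp × List (S × Qp)) : List S :=
  st.2.map Prod.fst

/-- Valid states of `P_k`: chains of transitions of `P` of length `k-1`, or shorter
ones starting at the initial state. -/
def ValidSt {S Qp : Type} (P : Buchi S Qp) (k : ℕ) (st : Qp × List (S × Qp)) : Prop :=
  chain P st.1 st.2 ∧ (st.2.length = k - 1 ∨ (st.2.length < k - 1 ∧ st.1 = P.q0))

/-- Extend an alternating sequence by a transition, dropping the first entry if the
window is full. -/
def push {S Qp : Type} (k : ℕ) (st : Qp × List (S × Qp)) (s : S) (q' : Qp) :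
    Qp × List (S × Qp) :=
  let l' := st.2 ++ [(s, q')]
  if k ≤ l'.length then
    match l' with
    | [] => (st.1, [])
    | e :: rest => (e.2, rest)
  else (st.1, l')

/-- The automaton `P_k`: `P` without `k`-infeasibility. -/
def Pk {Qp : Type} (T : Thy V F) (O : Ops V F T) (P : Buchi (Stmt I C F) Qp) (k : ℕ) :
    Buchi (Stmt I C F) (Qp × List (Stmt I C F × Qp)) where
  q0 := (P.q0, [])
  δ := fun st s st' => ValidSt P k st ∧ ValidSt P k st' ∧
        ∃ q', P.δ (lastQ st) s q' ∧ WinFeasible T O (stmts st ++ [s]) ∧ st' = push k st s q'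
  Acc := {st | lastQ st ∈ P.Acc}

/-! ### Infeasible accepting cycles and their removal -/

/-- The trace `(s₁ … s_n)^ω` of a cycle. -/
def cycTrace (T : Thy V F) (O : Ops V F T) {Qp : Type}
    (ϱ : List (Qp × Stmt I C F × Qp)) : ℕ → Stmt I C F :=
  fun t => ((ϱ[t % ϱ.length]?).map fun e => e.2.1).getD (trueStmt T O)

/-- `ϱ` is a cycle of transitions of `B`. -/
def IsCycle {S Qp : Type} (B : Buchi S Qp) (ϱ : List (Qp × S × Qp)) : Prop :=
  ϱ ≠ [] ∧ (∀ e ∈ ϱ, B.δ e.1 e.2.1 e.2.2) ∧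
  (∀ i, (h : i + 1 < ϱ.length) →
    (ϱ.get ⟨i + 1, h⟩).1 = (ϱ.get ⟨i, Nat.lt_of_succ_lt h⟩).2.2) ∧
  ∀ h : ϱ ≠ [], (ϱ.getLast h).2.2 = (ϱ.head h).1

/-- An infeasible accepting cycle. -/
def InfAccCycle {Qp : Type} (T : Thy V F) (O : Ops V F T)
    (B : Buchi (Stmt I C F) Qp) (ϱ : List (Qp × Stmt I C F × Qp)) : Prop :=
  IsCycle B ϱ ∧ (∃ e ∈ ϱ, e.1 ∈ B.Acc) ∧
  ∀ init : Assign V I C, ¬ Feasible T init (cycTrace T O ϱ)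

/-- A trace ends with the infinite repetition of the statements of the cycle `ϱ`. -/
def EndsWithCyc {Qp : Type} (T : Thy V F) (O : Ops V F T)
    (σ : ℕ → Stmt I C F) (ϱ : List (Qp × Stmt I C F × Qp)) : Prop :=
  ∃ N, ∀ j, σ (N + j) = cycTrace T O ϱ j

/-- The automaton `A_ϱ`, accepting exactly the traces ending with `ϱ^ω`. -/
def cycAut {Qp : Type} (ϱ : List (Qp × Stmt I C F × Qp)) :
    Buchi (Stmt I C F) (Option (Fin ϱ.length)) where
  q0 := none
  δ := fun st s st' =>
    match st with
    | none => st' = none ∨ ∃ h : ϱ ≠ [],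
        s = (ϱ.head h).2.1 ∧
        st' = some ⟨1 % ϱ.length, Nat.mod_lt _ (List.length_pos_iff.mpr h)⟩
    | some i => s = (ϱ.get i).2.1 ∧
        st' = some ⟨((i : ℕ) + 1) % ϱ.length,
          Nat.mod_lt _ (Nat.lt_of_le_of_lt (Nat.zero_le _) i.isLt)⟩
  Acc := {st | st ≠ none}

/-- A Büchi automaton bundled with its state type. -/
structure BAut (A : Type) : Type 1 where
  Q : Type
  B : Buchi A Q

/-- One removal step: remove (the languages of the automata `A_ϱ` for) a set of
infeasible accepting cycles from an automaton. -/
def RemStep (T : Thy V F) (O : Ops V F T) (x y : BAut (Stmt I C F)) : Prop :=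
  ∃ Cset : Set (List (x.Q × Stmt I C F × x.Q)),
    (∀ ϱ ∈ Cset, InfAccCycle T O x.B ϱ) ∧
    ∀ σ, y.B.Accepts σ ↔ (x.B.Accepts σ ∧ ∀ ϱ ∈ Cset, ¬ EndsWithCyc T O σ ϱ)

/-- `k'` iterations of removing infeasible accepting cycles. -/
def RemChain (T : Thy V F) (O : Ops V F T) :
    ℕ → BAut (Stmt I C F) → BAut (Stmt I C F) → Prop
  | 0, x, y => y = x
  | k' + 1, x, y => ∃ z, RemChain T O k' x z ∧ RemStep T O z y

/-- The universal projection of (a refinement of) the combined product: keep the first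
`m` of the `n` statements of each `combine`-labelled transition. -/
noncomputable def projU {Q' : Type} (T : Thy V F) (O : Ops V F T) {m n : ℕ}
    (_hm : 0 < m) (hmn : m ≤ n)
    (ρ : List (FTerm (I × Fin n) (C × Fin n) F))
    (υ : List ((C × Fin n) × FTerm (I × Fin n) (C × Fin n) F))
    (inps : List (I × Fin n))
    (B : Buchi (Stmt Empty (CStar (I × Fin n) (C × Fin n)) F) Q') :
    Buchi (Stmt (I × Fin n) (C × Fin n) F) Q' where
  q0 := B.q0
  δ := fun q w q' => ∃ (ss : Fin n → Stmt0 (I × Fin n) (C × Fin n) F)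
        (l : Set (AP (I × Fin n) (C × Fin n) F)),
        B.δ q (combine T O ρ υ inps ((List.finRange n).map ss) l) q' ∧
        w.1 = (List.finRange m).map fun j => ss (Fin.castLE hmn j)
  Acc := B.Acc

/-- The formula `∀π₁ … ∀π_m ∃π_{m+1} … ∃π_n. ψ`. -/
def AEform (m n : ℕ) (ψ : TSL (I × Fin n) (C × Fin n) F) : HyperTSL I C F (Fin n) :=
  (List.finRange n).foldr
    (fun (j : Fin n) acc => if (j : ℕ) < m then HyperTSL.all j acc else HyperTSL.ex j acc)
    (.qf ψ)

end TSLMC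
/-! ### Reduced and adapted computations -/

namespace TSLMC
open scoped Classical
variable {V I C F Pi : Type}

/-- The index `ι(t) = B·(t+1) − 3` for blocks of length `B`. -/
def iotaIdx (B t : ℕ) : ℕ := B * (t + 1) - 3

/-- The reduced computation: the combined computation at the indices `ι(t)`,
restricted to the original inputs and cells. -/
def reduceC (B : ℕ) (ζ : ℕ → Assign V Empty (CStar I C)) : ℕ → Assign V I C :=
  fun t x => ζ (iotaIdx B t) (.inr (.inl x.swap))

/-- The reduced computation of trace variable `j`: the combined hyper-computation at
the indices `ι(t)`, restricted to the `j`-indexed inputs and cells, renamed back. -/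
def reduceTr {n : ℕ} (B : ℕ) (j : Fin n)
    (ζ : ℕ → Assign V Empty (CStar (I × Fin n) (C × Fin n))) : ℕ → Assign V I C :=
  fun t x => ζ (iotaIdx B t)
    (.inr (.inl (match x with | .inl i => .inr (i, j) | .inr c => .inl (c, j))))

/-- Assembling a hyper-computation from one computation per trace variable
(`∅[π₁, ζ₁]…[π_n, ζ_n]`). -/
def assembleH {n : ℕ} (red : Fin n → ℕ → Assign V I C) :
    ℕ → Assign V (I × Fin n) (C × Fin n) :=
  fun t x => match x with
  | .inl (i, j) => red j t (.inl i)
  | .inr (c, j) => red j t (.inr c)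

/-- The adapted computation `ζ̃` of a computation `ζ`. -/
noncomputable def adapt (T : Thy V F) (upds : List (C × FTerm I C F)) (inps : List I)
    (init : Assign V I C) (initC : Assign V Empty (CStar I C))
    (ζ : ℕ → Assign V I C) : ℕ → Assign V Empty (CStar I C) := fun idx x =>
  let m := upds.length
  let k := inps.length
  let b := idx / (m + k + 3)
  let i := idx % (m + k + 3)
  let newTmp : ℕ → V := fun p =>
    ((upds[p]?).map fun u => u.2.eval T (prevA init ζ b)).getD (initC (.inr (.inr p)))
  let oldTmp : ℕ → V := fun p =>
    match b with
    | 0 => initC (.inr (.inr p))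
    | b' + 1 => ((upds[p]?).map fun u => u.2.eval T (prevA init ζ b')).getD
        (initC (.inr (.inr p)))
  match x with
  | .inl e => e.elim
  | .inr (.inr p) => if i < m then (if p ≤ i then newTmp p else oldTmp p) else newTmp p
  | .inr (.inl (.inl c)) => if i < m then prevA init ζ b (.inr c) else ζ b (.inr c)
  | .inr (.inl (.inr ii)) =>
      if i < m + 1 then prevA init ζ b (.inl ii)
      else if i ≤ m + k then
        (if inps.idxOf ii < i - m then ζ b (.inl ii) else prevA init ζ b (.inl ii))
      else ζ b (.inl ii)

/-- The adapted hyper-computation of computations `ζ_{π₁}, …, ζ_{π_n}`. -/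
noncomputable def hadapt {n : ℕ} (T : Thy V F)
    (upds : List ((C × Fin n) × FTerm (I × Fin n) (C × Fin n) F))
    (inps : List (I × Fin n)) (init : Assign V I C)
    (initC : Assign V Empty (CStar (I × Fin n) (C × Fin n)))
    (ζs : Fin n → ℕ → Assign V I C) :
    ℕ → Assign V Empty (CStar (I × Fin n) (C × Fin n)) := fun idx x =>
  let m := upds.length
  let k := inps.length
  let b := idx / (m + n + k + 2)
  let i := idx % (m + n + k + 2)
  let ζ' : ℕ → Assign V (I × Fin n) (C × Fin n) := assembleH ζs
  let hinit : Assign V (I × Fin n) (C × Fin n) := liftInit init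
  let newTmp : ℕ → V := fun p =>
    ((upds[p]?).map fun u => u.2.eval T (prevA hinit ζ' b)).getD (initC (.inr (.inr p)))
  let oldTmp : ℕ → V := fun p =>
    match b with
    | 0 => initC (.inr (.inr p))
    | b' + 1 => ((upds[p]?).map fun u => u.2.eval T (prevA hinit ζ' b')).getD
        (initC (.inr (.inr p)))
  match x with
  | .inl e => e.elim
  | .inr (.inr p) => if i < m then (if p ≤ i then newTmp p else oldTmp p) else newTmp p
  | .inr (.inl (.inl cj)) =>
      if i < m then prevA hinit ζ' b (.inr cj)
      else if i < m + n then
        (if (cj.2 : ℕ) < i - m + 1 then ζs cj.2 b (.inr cj.1)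
         else prevA hinit ζ' b (.inr cj))
      else ζ' b (.inr cj)
  | .inr (.inl (.inr ij)) =>
      if i < m + n then prevA hinit ζ' b (.inl ij)
      else if i < m + n + k then
        (if inps.idxOf ij < i - (m + n) + 1 then ζ' b (.inl ij)
         else prevA hinit ζ' b (.inl ij))
      else ζ' b (.inl ij)

/-- The composed trace `σ_t = ((σ_{π₁})_{π₁})_t; … ; ((σ_{π_n})_{π_n})_t`. -/
def composedTrace {n : ℕ} (σs : Fin n → ℕ → Stmt0 I C F) (t : ℕ) :
    List (Stmt0 (I × Fin n) (C × Fin n) F) :=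
  (List.finRange n).map fun j => (σs j t).rename j

/-- The composed trace, as a trace of (nonempty) program statements. -/
def composedStmt {n : ℕ} (hn : 0 < n) (σs : Fin n → ℕ → Stmt0 I C F) (t : ℕ) :
    Stmt (I × Fin n) (C × Fin n) F :=
  ⟨composedTrace σs t, by
    intro h
    have := congrArg List.length h
    simp [composedTrace] at this
    omega⟩

end TSLMC

/-!
Step `b` of `ζ̂′` is expanded into a block of `m + n + k + 2` hyper-assignments, one per
statement of `combine(σ_b, Seq(ζ̂′)_b)`. After the first `s` statements of the block the state
has a closed form: `tmp_p` holds its new value iff `p < s`, the cells of `π_j`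
hold their `ζ_{π_j}`-values at `b` iff `m + j < s`, and input `i` holds its `ζ̂′_b`-value iff
`m + n + idx(i) < s`. Consecutive states are then related by the statement between them: the
`save_values` assignments evaluate the update terms in `ζ̂′_{b-1}`, the renamed statement of
`π_j` is matched because `ζ_{π_j} ◁ σ_{π_j}`, each havoc changes a single input, and the two
final assertions hold because `Seq(ζ̂′)_b` records exactly which predicate and update terms hold
at `b`.
-/

namespace TSLMC
open scoped Classical

section Terms
variable {V I C F Pi : Type} (T : Thy V F)

theorem FTerm.eval_app (a : Assign V I C) (f : F) (ts : List (FTerm I C F)) :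
    (FTerm.app f ts).eval T a = T.ε f (ts.map (FTerm.eval T a)) := by
  rw [FTerm.eval, List.map_attach_eq_pmap, List.pmap_eq_map]

theorem FTerm.embed_app (f : F) (ts : List (FTerm I C F)) :
    (FTerm.app f ts).embed = FTerm.app f (ts.map FTerm.embed) := by
  rw [FTerm.embed, List.map_attach_eq_pmap, List.pmap_eq_map]

theorem FTerm.rename_app (π : Pi) (f : F) (ts : List (FTerm I C F)) :
    (FTerm.app f ts).rename π = FTerm.app f (ts.map (FTerm.rename π)) := by
  rw [FTerm.rename, List.map_attach_eq_pmap, List.pmap_eq_map]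

def projBase (a : Assign V Empty (CStar I C)) : Assign V I C
  | .inl i => a (.inr (.inl (.inr i)))
  | .inr c => a (.inr (.inl (.inl c)))

def projTrace (π : Pi) (a : Assign V (I × Pi) (C × Pi)) : Assign V I C
  | .inl i => a (.inl (i, π))
  | .inr c => a (.inr (c, π))

theorem FTerm.eval_embed (a : Assign V Empty (CStar I C)) :
    ∀ τ : FTerm I C F, τ.embed.eval T a = τ.eval T (projBase a)
  | .inp _ | .cell _ => by simp [FTerm.embed, FTerm.eval, projBase]
  | .app f ts => by
      rw [embed_app, eval_app, eval_app, List.map_map]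
      exact congrArg _ (List.map_congr_left fun t _ => FTerm.eval_embed a t)

theorem FTerm.eval_rename (π : Pi) (a : Assign V (I × Pi) (C × Pi)) :
    ∀ τ : FTerm I C F, (τ.rename π).eval T a = τ.eval T (projTrace π a)
  | .inp _ | .cell _ => by simp [FTerm.rename, FTerm.eval, projTrace]
  | .app f ts => by
      rw [rename_app, eval_app, eval_app, List.map_map]
      exact congrArg _ (List.map_congr_left fun t _ => FTerm.eval_rename π a t)

variable (O : Ops V F T)

theorem eval_conjTerm_eq_vtrue (a : Assign V Empty (CStar I C)) :
    ∀ l : List (FTerm Empty (CStar I C) F),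
      (conjTerm T O l).eval T a = T.vtrue ↔ ∀ τ ∈ l, τ.eval T a = T.vtrue
  | [] => by simp [conjTerm, FTerm.eval_app, O.htrue]
  | τ :: ts => by
      simp only [conjTerm, FTerm.eval_app, List.map_cons, List.map_nil, O.hand,
        ← eval_conjTerm_eq_vtrue a ts, List.forall_mem_cons]
      split_ifs with h
      · exact iff_of_true rfl h
      · exact iff_of_false O.tne.symm h

theorem eval_fneg_eq_vtrue (a : Assign V I C) (τ : FTerm I C F) :
    (FTerm.app O.fneg [τ]).eval T a = T.vtrue ↔ τ.eval T a ≠ T.vtrue := by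
  simp only [FTerm.eval_app, List.map_cons, List.map_nil, O.hneg]
  split_ifs with h
  · exact iff_of_false O.tne.symm (not_not.2 h)
  · exact iff_of_true rfl h

theorem eval_feq_eq_vtrue (a : Assign V I C) (τ₁ τ₂ : FTerm I C F) :
    (FTerm.app O.feq [τ₁, τ₂]).eval T a = T.vtrue ↔ τ₁.eval T a = τ₂.eval T a := by
  simp only [FTerm.eval_app, List.map_cons, List.map_nil, O.heq]
  split_ifs with h
  · exact iff_of_true rfl h
  · exact iff_of_false O.tne.symm h

end Terms

section Semantics
variable {V I C F Pi : Type} (T : Thy V F)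

/-- Executing `s` on `pre` may yield the cell values `post`; statements never constrain inputs. -/
def Stmt0.Sem : Stmt0 I C F → Assign V I C → (C → V) → Prop
  | .assert τ, pre, post => τ.eval T pre = T.vtrue ∧ ∀ c, post c = pre (.inr c)
  | .assign c τ, pre, post => post c = τ.eval T pre ∧ ∀ c', c' ≠ c → post c' = pre (.inr c')
  | .havoc c, pre, post => ∀ c', c' ≠ c → post c' = pre (.inr c')

theorem mem_seqW_inl (init : Assign V I C) (ζ : ℕ → Assign V I C) (ρ : Set (FTerm I C F))
    (υ : Set (C × FTerm I C F)) (t : ℕ) (τ : FTerm I C F) :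
    Sum.inl τ ∈ SeqW T init ζ ρ υ t ↔ τ ∈ ρ ∧ τ.eval T (ζ t) = T.vtrue :=
  Iff.rfl

theorem mem_seqW_inr (init : Assign V I C) (ζ : ℕ → Assign V I C) (ρ : Set (FTerm I C F))
    (υ : Set (C × FTerm I C F)) (t : ℕ) (u : C × FTerm I C F) :
    Sum.inr u ∈ SeqW T init ζ ρ υ t ↔ u ∈ υ ∧ u.2.eval T (prevA init ζ t) = ζ t (.inr u.1) :=
  Iff.rfl

theorem matchesAt_iff_sem (init : Assign V I C) (ζ : ℕ → Assign V I C) (σ : ℕ → Stmt0 I C F)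
    (t : ℕ) :
    matchesAt T init ζ σ t ↔ (σ t).Sem T (prevA init ζ t) fun c => ζ t (.inr c) := by
  unfold matchesAt
  cases σ t <;> rfl

def SemSeq (l : List (Stmt0 I C F)) (st : ℕ → Assign V I C) : Prop :=
  ∀ i (h : i < l.length), l[i].Sem T (st i) fun c => st (i + 1) (.inr c)

theorem semSeq_append {l₁ l₂ : List (Stmt0 I C F)} {st : ℕ → Assign V I C} {k : ℕ}
    (hk : l₁.length = k) (h₁ : SemSeq T l₁ st) (h₂ : SemSeq T l₂ fun i => st (k + i)) :
    SemSeq T (l₁ ++ l₂) st := by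
  subst hk
  intro i hi
  rcases Nat.lt_or_ge i l₁.length with hi₁ | hi₁
  · rw [List.getElem_append_left hi₁]
    exact h₁ i hi₁
  · obtain ⟨j, rfl⟩ := Nat.exists_eq_add_of_le hi₁
    rw [List.getElem_append_right hi₁]
    simpa [Nat.add_assoc] using h₂ j (by rw [List.length_append] at hi; omega)

theorem length_pos_of_length_eq {σ : ℕ → Stmt I C F} {B : ℕ}
    (hlen : ∀ t, (σ t).1.length = B) : 0 < B :=
  hlen 0 ▸ List.length_pos_iff.2 (σ 0).2

theorem fpos_of_length_eq {σ : ℕ → Stmt I C F} {B : ℕ} (hlen : ∀ t, (σ t).1.length = B) :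
    ∀ j, fpos σ j = (j / B, j % B)
  | 0 => by simp [fpos]
  | j + 1 => by
      have hB := length_pos_of_length_eq hlen
      have hj := Nat.mod_add_div j B
      have hr := Nat.mod_lt j hB
      rw [fpos, fpos_of_length_eq hlen j, hlen]
      dsimp only
      split_ifs with h
      · obtain ⟨hq, hr⟩ := (Nat.div_mod_unique (a := j + 1) (d := j / B) hB).2 ⟨by omega, h⟩
        rw [hq, hr]
      · obtain ⟨hq, hr⟩ := (Nat.div_mod_unique (a := j + 1) (d := j / B + 1) (c := 0) hB).2
          ⟨by rw [Nat.mul_succ]; omega, hB⟩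
        rw [hq, hr]

theorem flatten_of_length_eq {σ : ℕ → Stmt I C F} {B : ℕ} (hlen : ∀ t, (σ t).1.length = B)
    (j : ℕ) :
    flatten σ j = (σ (j / B)).1[j % B]'(by
      rw [hlen]; exact Nat.mod_lt j (length_pos_of_length_eq hlen)) := by
  simp only [flatten, fpos_of_length_eq hlen j]
  exact List.getD_eq_getElem _ _ _

theorem matchesC_of_semSeq {init : Assign V I C} {ζ : ℕ → Assign V I C} {σ : ℕ → Stmt I C F}
    {B : ℕ} (hlen : ∀ t, (σ t).1.length = B) (st : ℕ → ℕ → Assign V I C)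
    (hst : ∀ b i, i ≤ B → prevA init ζ (B * b + i) = st b i)
    (hsem : ∀ b, SemSeq T (σ b).1 (st b)) : MatchesC T init ζ σ := by
  intro j
  have hi : j % B < B := Nat.mod_lt j (length_pos_of_length_eq hlen)
  have hstep := hsem (j / B) (j % B) (by rw [hlen]; exact hi)
  rw [← hst _ _ hi.le, ← hst _ _ hi, Nat.add_succ, Nat.div_add_mod] at hstep
  rw [matchesAt_iff_sem, flatten_of_length_eq hlen]
  exact hstep

theorem Stmt0.sem_embed {s : Stmt0 I C F} {pre : Assign V Empty (CStar I C)}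
    {post : CStar I C → V} (hs : s.Sem T (projBase pre) fun c => post (.inl (.inl c)))
    (hrest : ∀ x, (∀ c, x ≠ .inl (.inl c)) → post x = pre (.inr x)) :
    s.embed.Sem T pre post := by
  cases s with
  | assert τ =>
    refine ⟨by rw [FTerm.eval_embed]; exact hs.1, ?_⟩
    rintro ((c | i) | p)
    · exact hs.2 c
    all_goals exact hrest _ (by simp)
  | assign c τ =>
    refine ⟨by rw [FTerm.eval_embed]; exact hs.1, ?_⟩
    rintro ((c' | i) | p) hne
    · exact hs.2 c' fun h => hne (h ▸ rfl)
    all_goals exact hrest _ (by simp)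
  | havoc c =>
    rintro ((c' | i) | p) hne
    · exact hs c' fun h => hne (h ▸ rfl)
    all_goals exact hrest _ (by simp)

theorem Stmt0.sem_rename {s : Stmt0 I C F} (π : Pi) {pre : Assign V (I × Pi) (C × Pi)}
    {post : C × Pi → V} (hs : s.Sem T (projTrace π pre) fun c => post (c, π))
    (hrest : ∀ c π', π' ≠ π → post (c, π') = pre (.inr (c, π'))) :
    (s.rename π).Sem T pre post := by
  cases s with
  | assert τ =>
    refine ⟨by rw [FTerm.eval_rename]; exact hs.1, fun ⟨c, π'⟩ => ?_⟩
    by_cases h : π' = π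
    · subst h; exact hs.2 c
    · exact hrest c π' h
  | assign c τ =>
    refine ⟨by rw [FTerm.eval_rename]; exact hs.1, fun ⟨c', π'⟩ hne => ?_⟩
    by_cases h : π' = π
    · subst h; exact hs.2 c' fun h' => hne (h' ▸ rfl)
    · exact hrest c' π' h
  | havoc c =>
    refine fun ⟨c', π'⟩ hne => ?_
    by_cases h : π' = π
    · subst h; exact hs c' fun h' => hne (h' ▸ rfl)
    · exact hrest c' π' h

theorem length_combine (O : Ops V F T) (ρ : List (FTerm I C F)) (υ : List (C × FTerm I C F))
    (inps : List I) (s : List (Stmt0 I C F)) (l : Set (AP I C F)) :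
    (combine T O ρ υ inps s l).1.length = υ.length + s.length + inps.length + 2 := by
  simp [combine]
  omega

end Semantics

section Adapted
variable {V I C F : Type} {n : ℕ} (T : Thy V F)
  (υ : List ((C × Fin n) × FTerm (I × Fin n) (C × Fin n) F)) (inps : List (I × Fin n))
  (init : Assign V I C) (initC : Assign V Empty (CStar (I × Fin n) (C × Fin n)))
  (ζs : Fin n → ℕ → Assign V I C)

noncomputable def newTmp (b p : ℕ) : V :=
  ((υ[p]?).map fun u => u.2.eval T (prevA (liftInit init) (assembleH ζs) b)).getD
    (initC (.inr (.inr p)))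

noncomputable def oldTmp : ℕ → ℕ → V
  | 0, p => initC (.inr (.inr p))
  | b + 1, p => newTmp T υ init initC ζs b p

theorem oldTmp_eq_newTmp {b p : ℕ} (hp : υ.length ≤ p) :
    oldTmp T υ init initC ζs b p = newTmp T υ init initC ζs b p := by
  have : ∀ b, newTmp T υ init initC ζs b p = initC (.inr (.inr p)) := fun b => by
    simp [newTmp, List.getElem?_eq_none hp]
  cases b <;> simp only [oldTmp, this]

/-- The hyper-assignment reached after the first `s` statements of the `b`-th block of the
adapted hyper-computation. -/
noncomputable def blockState (b s : ℕ) : Assign V Empty (CStar (I × Fin n) (C × Fin n))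
  | .inl e => e.elim
  | .inr (.inr p) => if p < s then newTmp T υ init initC ζs b p else oldTmp T υ init initC ζs b p
  | .inr (.inl (.inl cj)) =>
      if υ.length + cj.2 < s then assembleH ζs b (.inr cj)
      else prevA (liftInit init) (assembleH ζs) b (.inr cj)
  | .inr (.inl (.inr ij)) =>
      if υ.length + n + inps.idxOf ij < s then assembleH ζs b (.inl ij)
      else prevA (liftInit init) (assembleH ζs) b (.inl ij)

theorem hadapt_eq_blockState {b i : ℕ} (hi : i < υ.length + n + inps.length + 2) :
    hadapt T υ inps init initC ζs ((υ.length + n + inps.length + 2) * b + i) =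
      blockState T υ inps init initC ζs b (i + 1) := by
  obtain ⟨hq, hr⟩ := (Nat.div_mod_unique (a := (υ.length + n + inps.length + 2) * b + i)
    (d := b) (c := i) (by omega)).2 ⟨by ring, hi⟩
  funext x
  rcases x with e | ((⟨c, j⟩ | ij) | p)
  · exact e.elim
  · have := j.isLt
    simp only [hadapt, blockState, hq, hr]
    split_ifs <;> first | rfl | omega
  · have := @List.idxOf_le_length _ _ _ inps ij
    simp only [hadapt, blockState, hq, hr]
    split_ifs <;> first | rfl | omega
  · simp only [hadapt, blockState, hq, hr]
    split_ifs <;> first | rfl | omega | (cases b <;> rfl) |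
      exact (oldTmp_eq_newTmp T υ init initC ζs (by omega)).symm

theorem blockState_succ_zero (b : ℕ) :
    blockState T υ inps init initC ζs (b + 1) 0 =
      blockState T υ inps init initC ζs b (υ.length + n + inps.length + 2) := by
  funext x
  rcases x with e | ((⟨c, j⟩ | ij) | p)
  · exact e.elim
  · have := j.isLt
    simp only [blockState, if_pos (show υ.length + j < υ.length + n + inps.length + 2 by omega)]
    rfl
  · have := @List.idxOf_le_length _ _ _ inps ij
    simp only [blockState,
      if_pos (show υ.length + n + inps.idxOf ij < υ.length + n + inps.length + 2 by omega)]
    rfl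
  · simp only [blockState, Nat.not_lt_zero, if_false]
    split_ifs with hp
    · rfl
    · exact (oldTmp_eq_newTmp T υ init initC ζs (by omega)).symm

theorem prevA_hadapt_eq_blockState
    (hic : ∀ p : C × Fin n, initC (.inr (.inl (.inl p))) = init (.inr p.1))
    (hii : ∀ p : I × Fin n, initC (.inr (.inl (.inr p))) = init (.inl p.1))
    (b : ℕ) {i : ℕ} (hi : i ≤ υ.length + n + inps.length + 2) :
    prevA initC (hadapt T υ inps init initC ζs) ((υ.length + n + inps.length + 2) * b + i) =
      blockState T υ inps init initC ζs b i := by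
  obtain _ | i := i
  · obtain _ | b := b
    · funext x
      rcases x with e | ((cj | ij) | p)
      · exact e.elim
      · exact hic cj
      · exact hii ij
      · rfl
    · rw [blockState_succ_zero, ← hadapt_eq_blockState T υ inps init initC ζs (by omega),
        show (υ.length + n + inps.length + 2) * (b + 1) + 0 =
          (υ.length + n + inps.length + 2) * b + (υ.length + n + inps.length + 1) + 1 by ring]
      rfl
  · exact hadapt_eq_blockState T υ inps init initC ζs (by omega)

theorem projBase_blockState_of_le {b s : ℕ} (hs : s ≤ υ.length) :
    projBase (blockState T υ inps init initC ζs b s) = prevA (liftInit init) (assembleH ζs) b := by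
  funext x
  rcases x with ij | ⟨c, j⟩
  · simp only [projBase, blockState, if_neg (show ¬ υ.length + n + inps.idxOf ij < s by omega)]
  · simp only [projBase, blockState, if_neg (show ¬ υ.length + j < s by omega)]

theorem projBase_blockState_of_ge (hinps : ∀ p : I × Fin n, p ∈ inps) {b s : ℕ}
    (hs : υ.length + n + inps.length ≤ s) :
    projBase (blockState T υ inps init initC ζs b s) = assembleH ζs b := by
  funext x
  rcases x with ij | ⟨c, j⟩
  · have := List.idxOf_lt_length_of_mem (hinps ij)
    simp only [projBase, blockState, if_pos (show υ.length + n + inps.idxOf ij < s by omega)]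
  · have := j.isLt
    simp only [projBase, blockState, if_pos (show υ.length + j < s by omega)]

theorem blockState_succ_of_ge (hinps : ∀ p : I × Fin n, p ∈ inps) {b s : ℕ}
    (hs : υ.length + n + inps.length ≤ s) :
    blockState T υ inps init initC ζs b (s + 1) = blockState T υ inps init initC ζs b s := by
  funext x
  rcases x with e | ((⟨c, j⟩ | ij) | p)
  · exact e.elim
  · have := j.isLt
    simp only [blockState, if_pos (show υ.length + j < s by omega),
      if_pos (show υ.length + j < s + 1 by omega)]
  · have := List.idxOf_lt_length_of_mem (hinps ij)
    simp only [blockState, if_pos (show υ.length + n + inps.idxOf ij < s by omega),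
      if_pos (show υ.length + n + inps.idxOf ij < s + 1 by omega)]
  · simp only [blockState]
    split_ifs <;> first | rfl | omega | exact (oldTmp_eq_newTmp T υ init initC ζs (by omega)).symm

theorem semSeq_saveValues (b : ℕ) :
    SemSeq T (υ.mapIdx fun j u => Stmt0.assign (Sum.inr j) u.2.embed)
      (blockState T υ inps init initC ζs b) := by
  intro i hi
  rw [List.length_mapIdx] at hi
  rw [List.getElem_mapIdx]
  refine ⟨?_, ?_⟩
  · rw [FTerm.eval_embed, projBase_blockState_of_le T υ inps init initC ζs hi.le]
    simp [blockState, newTmp, List.getElem?_eq_getElem hi]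
  · rintro ((⟨c, j⟩ | ij) | p) hne
    · simp only [blockState, if_neg (show ¬ υ.length + j < i by omega),
        if_neg (show ¬ υ.length + j < i + 1 by omega)]
    · simp only [blockState, if_neg (show ¬ υ.length + n + inps.idxOf ij < i by omega),
        if_neg (show ¬ υ.length + n + inps.idxOf ij < i + 1 by omega)]
    · have hp : p ≠ i := fun h => hne (h ▸ rfl)
      simp only [blockState]
      split_ifs <;> first | rfl | omega

theorem semSeq_composedTrace {σs : Fin n → ℕ → Stmt0 I C F} {b : ℕ}
    (hσs : ∀ j, matchesAt T init (ζs j) (σs j) b) :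
    SemSeq T ((composedTrace σs b).map Stmt0.embed)
      fun i => blockState T υ inps init initC ζs b (υ.length + i) := by
  intro i hi
  simp only [composedTrace, List.length_map, List.length_finRange] at hi
  simp only [composedTrace, List.getElem_map, List.getElem_finRange, Fin.cast_mk]
  refine Stmt0.sem_embed T (Stmt0.sem_rename T _ ?_ ?_) ?_
  · have hpre : projTrace (⟨i, hi⟩ : Fin n)
        (projBase (blockState T υ inps init initC ζs b (υ.length + i))) =
        prevA init (ζs ⟨i, hi⟩) b := by
      funext x
      rcases x with i' | c
      · simp only [projTrace, projBase, blockState, if_neg (show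
          ¬ υ.length + n + inps.idxOf (i', (⟨i, hi⟩ : Fin n)) < υ.length + i by omega)]
        cases b <;> rfl
      · simp only [projTrace, projBase, blockState, lt_irrefl, if_false]
        cases b <;> rfl
    have hpost : (fun c => blockState T υ inps init initC ζs b (υ.length + (i + 1))
        (.inr (.inl (.inl (c, (⟨i, hi⟩ : Fin n)))))) = fun c => ζs ⟨i, hi⟩ b (.inr c) := by
      funext c
      simp only [blockState, if_pos (show υ.length + i < υ.length + (i + 1) by omega)]
      rfl
    rw [hpre, hpost, ← matchesAt_iff_sem]
    exact hσs _
  · intro c j hj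
    have hj' : (j : ℕ) ≠ i := fun h => hj (Fin.ext h)
    simp only [blockState, projBase]
    split_ifs <;> first | rfl | omega
  · rintro ((cj | ij) | p) hx
    · exact absurd rfl (hx cj)
    · simp only [blockState, if_neg (show ¬ υ.length + n + inps.idxOf ij < υ.length + i by omega),
        if_neg (show ¬ υ.length + n + inps.idxOf ij < υ.length + (i + 1) by omega)]
    · simp only [blockState]
      split_ifs <;> first | rfl | omega | exact (oldTmp_eq_newTmp T υ init initC ζs (by omega)).symm

theorem semSeq_newInputs (b : ℕ) :
    SemSeq T (inps.map fun i => Stmt0.havoc (Sum.inl (Sum.inr i)))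
      fun r => blockState T υ inps init initC ζs b (υ.length + n + r) := by
  intro r hr
  rw [List.length_map] at hr
  rw [List.getElem_map]
  rintro ((⟨c, j⟩ | ij) | p) hne
  · have := j.isLt
    simp only [blockState, if_pos (show υ.length + j < υ.length + n + r by omega),
      if_pos (show υ.length + j < υ.length + n + (r + 1) by omega)]
  · have hidx : inps.idxOf ij ≠ r := by
      rintro rfl
      exact hne (congrArg (Sum.inl ∘ Sum.inr) (List.getElem_idxOf hr).symm)
    simp only [blockState]
    split_ifs <;> first | rfl | omega
  · simp only [blockState]
    split_ifs <;> first | rfl | omega | exact (oldTmp_eq_newTmp T υ init initC ζs (by omega)).symm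

variable (O : Ops V F T) (ρ : List (FTerm (I × Fin n) (C × Fin n) F))

theorem sem_checkPreds (hinps : ∀ p : I × Fin n, p ∈ inps) (b : ℕ) :
    (Stmt0.assert (conjTerm T O (ρ.map fun τ =>
        if Sum.inl τ ∈ SeqW T (liftInit init) (assembleH ζs) {τ | τ ∈ ρ} {u | u ∈ υ} b
        then τ.embed else .app O.fneg [τ.embed]))).Sem T
      (blockState T υ inps init initC ζs b (υ.length + n + inps.length))
      fun c => blockState T υ inps init initC ζs b (υ.length + n + inps.length + 1) (.inr c) := by
  rw [blockState_succ_of_ge T υ inps init initC ζs hinps le_rfl]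
  refine ⟨(eval_conjTerm_eq_vtrue T O _ _).2 fun τ' hτ' => ?_, fun _ => rfl⟩
  obtain ⟨τ, hτ, rfl⟩ := List.mem_map.1 hτ'
  have hbase := projBase_blockState_of_ge T υ inps init initC ζs hinps (b := b) le_rfl
  split_ifs with hl
  · rw [FTerm.eval_embed, hbase]
    exact ((mem_seqW_inl T _ _ _ _ b τ).1 hl).2
  · rw [eval_fneg_eq_vtrue, FTerm.eval_embed, hbase]
    exact fun h => hl ((mem_seqW_inl T _ _ _ _ b τ).2 ⟨hτ, h⟩)

theorem sem_checkUpdates (hinps : ∀ p : I × Fin n, p ∈ inps) (b : ℕ) :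
    (Stmt0.assert (conjTerm T O (υ.mapIdx fun j u =>
        let eqt : FTerm Empty (CStar (I × Fin n) (C × Fin n)) F :=
          .app O.feq [.cell (Sum.inl (Sum.inl u.1)), .cell (Sum.inr j)]
        if Sum.inr u ∈ SeqW T (liftInit init) (assembleH ζs) {τ | τ ∈ ρ} {u | u ∈ υ} b
        then eqt else .app O.fneg [eqt]))).Sem T
      (blockState T υ inps init initC ζs b (υ.length + n + inps.length + 1))
      fun c =>
        blockState T υ inps init initC ζs b (υ.length + n + inps.length + 1 + 1) (.inr c) := by
  rw [blockState_succ_of_ge T υ inps init initC ζs hinps (s := υ.length + n + inps.length + 1)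
    (by omega)]
  refine ⟨(eval_conjTerm_eq_vtrue T O _ _).2 fun τ' hτ' => ?_, fun _ => rfl⟩
  obtain ⟨j, hj, rfl⟩ := List.mem_mapIdx.1 hτ'
  have hcell : blockState T υ inps init initC ζs b (υ.length + n + inps.length + 1)
      (.inr (.inl (.inl υ[j].1))) = assembleH ζs b (.inr υ[j].1) :=
    if_pos (by have := υ[j].1.2.isLt; omega)
  have htmp : blockState T υ inps init initC ζs b (υ.length + n + inps.length + 1)
      (.inr (.inr j)) = υ[j].2.eval T (prevA (liftInit init) (assembleH ζs) b) := by
    simp only [blockState, if_pos (show j < υ.length + n + inps.length + 1 by omega), newTmp,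
      List.getElem?_eq_getElem hj, Option.map_some, Option.getD_some]
  have hmem := mem_seqW_inr T (liftInit init) (assembleH ζs) {τ | τ ∈ ρ} {u | u ∈ υ} b υ[j]
  dsimp only
  split_ifs with hl
  · rw [eval_feq_eq_vtrue]
    simp only [FTerm.eval, hcell, htmp]
    exact (hmem.1 hl).2.symm
  · rw [eval_fneg_eq_vtrue, Ne, eval_feq_eq_vtrue]
    simp only [FTerm.eval, hcell, htmp]
    exact fun h => hl (hmem.2 ⟨List.getElem_mem hj, h.symm⟩)

theorem semSeq_combine_blockState (hinps : ∀ p : I × Fin n, p ∈ inps)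
    {σs : Fin n → ℕ → Stmt0 I C F} {b : ℕ} (hσs : ∀ j, matchesAt T init (ζs j) (σs j) b) :
    SemSeq T (combine T O ρ υ inps (composedTrace σs b)
        (SeqW T (liftInit init) (assembleH ζs) {τ | τ ∈ ρ} {u | u ∈ υ} b)).1
      (blockState T υ inps init initC ζs b) := by
  unfold combine
  refine semSeq_append T (k := υ.length + n + inps.length) (by simp [composedTrace]; omega)
    (semSeq_append T (k := υ.length + n) (by simp [composedTrace])
      (semSeq_append T List.length_mapIdx (semSeq_saveValues T υ inps init initC ζs b)
        (semSeq_composedTrace T υ inps init initC ζs hσs))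
      (semSeq_newInputs T υ inps init initC ζs b)) ?_
  rintro (_ | _ | i) hi
  · exact sem_checkPreds T υ inps init initC ζs O ρ hinps b
  · exact sem_checkUpdates T υ inps init initC ζs O ρ hinps b
  · simp at hi

end Adapted

theorem hyper_adapted_matches_general
    {V I C F : Type} (T : Thy V F) (O : Ops V F T) {n : ℕ}
    (init : Assign V I C)
    (initC : Assign V Empty (CStar (I × Fin n) (C × Fin n)))
    (hic : ∀ p : C × Fin n, initC (.inr (.inl (.inl p))) = init (.inr p.1))
    (hii : ∀ p : I × Fin n, initC (.inr (.inl (.inr p))) = init (.inl p.1))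
    (ρ : List (FTerm (I × Fin n) (C × Fin n) F))
    (υ : List ((C × Fin n) × FTerm (I × Fin n) (C × Fin n) F))
    (inps : List (I × Fin n)) (hinps : ∀ p : I × Fin n, p ∈ inps)
    (σs : Fin n → ℕ → Stmt0 I C F) (ζs : Fin n → ℕ → Assign V I C)
    (hζs : ∀ j, Matches T init (ζs j) (σs j)) :
    MatchesC T initC (hadapt T υ inps init initC ζs)
      (fun t => combine T O ρ υ inps (composedTrace σs t)
        (SeqW T (liftInit init) (assembleH ζs) {τ | τ ∈ ρ} {u | u ∈ υ} t)) :=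
  matchesC_of_semSeq T (fun _ => by simp [length_combine, composedTrace])
    (blockState T υ inps init initC ζs)
    (fun b _ => prevA_hadapt_eq_blockState T υ inps init initC ζs hic hii b)
    (fun _ => semSeq_combine_blockState T υ inps init initC ζs O ρ hinps fun j => hζs j _)

theorem hyper_adapted_matches
    {V I C F : Type} (T : Thy V F) (O : Ops V F T) {n : ℕ}
    (init : Assign V I C)
    (initC : Assign V Empty (CStar (I × Fin n) (C × Fin n)))
    (hic : ∀ p : C × Fin n, initC (.inr (.inl (.inl p))) = init (.inr p.1))
    (hii : ∀ p : I × Fin n, initC (.inr (.inl (.inr p))) = init (.inl p.1))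
    (ρ : List (FTerm (I × Fin n) (C × Fin n) F)) (hρ : ∀ τ ∈ ρ, IsPredTerm T τ)
    (υ : List ((C × Fin n) × FTerm (I × Fin n) (C × Fin n) F))
    (inps : List (I × Fin n)) (hinps : ∀ p : I × Fin n, p ∈ inps) (hnd : inps.Nodup)
    (σs : Fin n → ℕ → Stmt0 I C F) (ζs : Fin n → ℕ → Assign V I C)
    (hζs : ∀ j, Matches T init (ζs j) (σs j)) :
    MatchesC T initC (hadapt T υ inps init initC ζs)
      (fun t => combine T O ρ υ inps (composedTrace σs t)
        (SeqW T (liftInit init) (assembleH ζs) {τ | τ ∈ ρ} {u | u ∈ υ} t)) :=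
  hyper_adapted_matches_general T O init initC hic hii ρ υ inps hinps σs ζs hζs

end TSLMC
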